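/- arXiv:1310.4866 — 4 statements merged into one kernel-verified Lean document; each statement's English description precedes it below -/
import Mathlib

section
/- Let B be the exterior algebra over ℚ on seven generators x₁, y₁, x₂, y₂, g₁, g₂, g₃, and let I be the two-sided ideal generated by: g₂g₃ − g₁g₃ + g₁g₂; x₁g₁; y₁g₁; x₂g₂; y₂g₂; (x₁−x₂)g₃; (y₁−y₂)g₃. Let A = B/I and let d be the ℚ-linear graded derivation of B determined by dx_i = dy_i = 0, dg₁ = x₁y₁, dg₂ = x₂y₂, dg₃ = x₁y₁ − x₁y₂ − x₂y₁ + x₂y₂. Then d(I) ⊆ I, so d descends to a differential on A. -/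
open ExteriorAlgebra

/-- `B`, the exterior algebra over `ℚ` on the seven generators
`x₁, y₁, x₂, y₂, g₁, g₂, g₃` (indices `0,…,6`). -/
noncomputable abbrev Lam7 : Type := ExteriorAlgebra ℚ (Fin 7 → ℚ)

/-- The generators: `e7 0 = x₁`, `e7 1 = y₁`, `e7 2 = x₂`, `e7 3 = y₂`,
`e7 4 = g₁`, `e7 5 = g₂`, `e7 6 = g₃`. -/
noncomputable def e7 (i : Fin 7) : Lam7 := ExteriorAlgebra.ι ℚ (Pi.single i 1)

/-- The defining relations of the DGA of the elliptic arrangement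
`{ker α₁, ker α₂, ker (α₁ − α₂)}` in `E²`:
`g₂g₃ − g₁g₃ + g₁g₂`, `x₁g₁`, `y₁g₁`, `x₂g₂`, `y₂g₂`, `(x₁−x₂)g₃`, `(y₁−y₂)g₃`. -/
noncomputable def rels7 : Set Lam7 :=
  { e7 5 * e7 6 - e7 4 * e7 6 + e7 4 * e7 5,
    e7 0 * e7 4, e7 1 * e7 4, e7 2 * e7 5, e7 3 * e7 5,
    (e7 0 - e7 2) * e7 6, (e7 1 - e7 3) * e7 6 }

/-- The two-sided ideal `I` generated by the relations, as a `ℚ`-submodule. -/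
noncomputable def idl7 : Submodule ℚ Lam7 :=
  Submodule.span ℚ {x | ∃ a b r : Lam7, r ∈ rels7 ∧ x = a * r * b}

/-- The grading (parity) involution of the exterior algebra, negating each
degree-one generator. -/
noncomputable def sigma7 : Lam7 →ₐ[ℚ] Lam7 := CliffordAlgebra.involute

/-- `d` is the graded derivation of `B` determined by `dxᵢ = dyᵢ = 0`,
`dg₁ = x₁y₁`, `dg₂ = x₂y₂`, `dg₃ = x₁y₁ − x₁y₂ − x₂y₁ + x₂y₂`:
it satisfies the graded Leibniz rule `d(ab) = (da)b + σ(a)(db)` (with `σ` the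
parity involution) and takes the prescribed values on the generators. -/
def IsDiff7 (d : Lam7 →ₗ[ℚ] Lam7) : Prop :=
  (∀ a b : Lam7, d (a * b) = d a * b + sigma7 a * d b) ∧
  d (e7 0) = 0 ∧ d (e7 1) = 0 ∧ d (e7 2) = 0 ∧ d (e7 3) = 0 ∧
  d (e7 4) = e7 0 * e7 1 ∧
  d (e7 5) = e7 2 * e7 3 ∧
  d (e7 6) = e7 0 * e7 1 - e7 0 * e7 3 - e7 2 * e7 1 + e7 2 * e7 3

/-! ### Auxiliary lemmas -/

lemma sigma7_e7 (i : Fin 7) : sigma7 (e7 i) = -(e7 i) := CliffordAlgebra.involute_ι _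

lemma e7_sq (i : Fin 7) : e7 i * e7 i = 0 := ι_sq_zero _

lemma e7_swap (i j : Fin 7) (_ : i < j) : e7 j * e7 i = -(e7 i * e7 j) := by
  have h0 := ι_add_mul_swap (R := ℚ) (M := Fin 7 → ℚ) (Pi.single j 1) (Pi.single i 1)
  rw [show ExteriorAlgebra.ι ℚ (Pi.single j 1) = e7 j from rfl,
    show ExteriorAlgebra.ι ℚ (Pi.single i 1) = e7 i from rfl] at h0
  linear_combination (norm := noncomm_ring) h0

lemma e7_swap' (i j : Fin 7) (x : Lam7) (h : i < j) :
    e7 j * (e7 i * x) = -(e7 i * (e7 j * x)) := by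
  rw [← mul_assoc, e7_swap i j h, neg_mul, mul_assoc]

lemma e7_sq' (i : Fin 7) (x : Lam7) : e7 i * (e7 i * x) = 0 := by
  rw [← mul_assoc, e7_sq, zero_mul]

lemma gen_mem (a b r : Lam7) (hr : r ∈ rels7) : a * r * b ∈ idl7 :=
  Submodule.subset_span ⟨a, b, r, hr, rfl⟩

lemma gen_mem' (a r : Lam7) (hr : r ∈ rels7) : a * r ∈ idl7 := by
  simpa using gen_mem a 1 r hr

lemma idl7_mul_left (a : Lam7) {x : Lam7} (hx : x ∈ idl7) : a * x ∈ idl7 := by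
  refine Submodule.span_induction ?_ ?_ ?_ ?_ hx
  · rintro y ⟨c, b, r, hr, rfl⟩
    simpa [mul_assoc] using gen_mem (a * c) b r hr
  · simpa using Submodule.zero_mem idl7
  · intro x y _ _ hx hy
    simpa [mul_add] using Submodule.add_mem _ hx hy
  · intro q x _ hx
    simpa [mul_smul_comm] using Submodule.smul_mem _ q hx

lemma idl7_mul_right (b : Lam7) {x : Lam7} (hx : x ∈ idl7) : x * b ∈ idl7 := by
  refine Submodule.span_induction ?_ ?_ ?_ ?_ hx
  · rintro y ⟨a, c, r, hr, rfl⟩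
    simpa [mul_assoc] using gen_mem a (c * b) r hr
  · simpa using Submodule.zero_mem idl7
  · intro x y _ _ hx hy
    simpa [add_mul] using Submodule.add_mem _ hx hy
  · intro q x _ hx
    simpa [smul_mul_assoc] using Submodule.smul_mem _ q hx

lemma mem_rels1 : e7 5 * e7 6 - e7 4 * e7 6 + e7 4 * e7 5 ∈ rels7 := Set.mem_insert _ _
lemma mem_rels2 : e7 0 * e7 4 ∈ rels7 := Set.mem_insert_of_mem _ (Set.mem_insert _ _)
lemma mem_rels3 : e7 1 * e7 4 ∈ rels7 :=
  Set.mem_insert_of_mem _ <| Set.mem_insert_of_mem _ <| Set.mem_insert _ _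
lemma mem_rels4 : e7 2 * e7 5 ∈ rels7 :=
  Set.mem_insert_of_mem _ <| Set.mem_insert_of_mem _ <| Set.mem_insert_of_mem _ <|
    Set.mem_insert _ _
lemma mem_rels5 : e7 3 * e7 5 ∈ rels7 :=
  Set.mem_insert_of_mem _ <| Set.mem_insert_of_mem _ <| Set.mem_insert_of_mem _ <|
    Set.mem_insert_of_mem _ <| Set.mem_insert _ _
lemma mem_rels6 : (e7 0 - e7 2) * e7 6 ∈ rels7 :=
  Set.mem_insert_of_mem _ <| Set.mem_insert_of_mem _ <| Set.mem_insert_of_mem _ <|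
    Set.mem_insert_of_mem _ <| Set.mem_insert_of_mem _ <| Set.mem_insert _ _
lemma mem_rels7 : (e7 1 - e7 3) * e7 6 ∈ rels7 :=
  Set.mem_insert_of_mem _ <| Set.mem_insert_of_mem _ <| Set.mem_insert_of_mem _ <|
    Set.mem_insert_of_mem _ <| Set.mem_insert_of_mem _ <| Set.mem_insert_of_mem _ rfl

lemma sigma7_rels {r : Lam7} (hr : r ∈ rels7) : sigma7 r = r := by
  simp only [rels7, Set.mem_insert_iff, Set.mem_singleton_iff] at hr
  rcases hr with rfl | rfl | rfl | rfl | rfl | rfl | rfl <;>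
    (simp only [map_mul, map_sub, map_add, sigma7_e7, neg_mul, mul_neg, neg_neg,
        sub_neg_eq_add]) <;>
    try noncomm_ring

set_option maxHeartbeats 2000000 in
lemma d_rels (d : Lam7 →ₗ[ℚ] Lam7) (hd : IsDiff7 d) {r : Lam7} (hr : r ∈ rels7) :
    d r ∈ idl7 := by
  obtain ⟨hL, h0, h1, h2, h3, h4, h5, h6⟩ := hd
  simp only [rels7, Set.mem_insert_iff, Set.mem_singleton_iff] at hr
  rcases hr with rfl | rfl | rfl | rfl | rfl | rfl | rfl
  · -- the hard case : `d(g₂g₃ − g₁g₃ + g₁g₂)` is an explicit combination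
    have key : d (e7 5 * e7 6 - e7 4 * e7 6 + e7 4 * e7 5) =
        -(e7 2) * ((e7 1 - e7 3) * e7 6) + e7 1 * ((e7 0 - e7 2) * e7 6)
        + e7 0 * (e7 3 * e7 5) + -(e7 1) * (e7 2 * e7 5) + -(e7 2) * (e7 3 * e7 5)
        + e7 0 * (e7 1 * e7 4) + e7 3 * (e7 0 * e7 4) + -(e7 2) * (e7 1 * e7 4) := by
      rw [map_add, map_sub, hL, hL, hL, h4, h5, h6, sigma7_e7, sigma7_e7]
      simp (config := { decide := true }) only [e7_swap, e7_swap', e7_sq, e7_sq',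
        mul_assoc, mul_add, add_mul, sub_mul, mul_sub, neg_mul, mul_neg, neg_neg,
        mul_zero, zero_mul, add_zero, zero_add, sub_zero, zero_sub, neg_zero,
        sub_neg_eq_add, neg_add_rev]
      abel
    rw [key]
    exact Submodule.add_mem _ (Submodule.add_mem _ (Submodule.add_mem _
      (Submodule.add_mem _ (Submodule.add_mem _ (Submodule.add_mem _
        (Submodule.add_mem _ (gen_mem' _ _ mem_rels7) (gen_mem' _ _ mem_rels6))
        (gen_mem' _ _ mem_rels5)) (gen_mem' _ _ mem_rels4)) (gen_mem' _ _ mem_rels5))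
      (gen_mem' _ _ mem_rels3)) (gen_mem' _ _ mem_rels2)) (gen_mem' _ _ mem_rels3)
  · have key : d (e7 0 * e7 4) = 0 := by
      rw [hL, h0, h4, sigma7_e7]
      simp (config := { decide := true }) only [e7_swap, e7_swap', e7_sq, e7_sq',
        mul_assoc, mul_add, add_mul, sub_mul, mul_sub, neg_mul, mul_neg, neg_neg,
        mul_zero, zero_mul, add_zero, zero_add, sub_zero, zero_sub, neg_zero,
        sub_self, sub_neg_eq_add, neg_add_rev]
      try abel
    rw [key]; exact Submodule.zero_mem _
  · have key : d (e7 1 * e7 4) = 0 := by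
      rw [hL, h1, h4, sigma7_e7]
      simp (config := { decide := true }) only [e7_swap, e7_swap', e7_sq, e7_sq',
        mul_assoc, mul_add, add_mul, sub_mul, mul_sub, neg_mul, mul_neg, neg_neg,
        mul_zero, zero_mul, add_zero, zero_add, sub_zero, zero_sub, neg_zero,
        sub_self, sub_neg_eq_add, neg_add_rev]
      try abel
    rw [key]; exact Submodule.zero_mem _
  · have key : d (e7 2 * e7 5) = 0 := by
      rw [hL, h2, h5, sigma7_e7]
      simp (config := { decide := true }) only [e7_swap, e7_swap', e7_sq, e7_sq',
        mul_assoc, mul_add, add_mul, sub_mul, mul_sub, neg_mul, mul_neg, neg_neg,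
        mul_zero, zero_mul, add_zero, zero_add, sub_zero, zero_sub, neg_zero,
        sub_self, sub_neg_eq_add, neg_add_rev]
      try abel
    rw [key]; exact Submodule.zero_mem _
  · have key : d (e7 3 * e7 5) = 0 := by
      rw [hL, h3, h5, sigma7_e7]
      simp (config := { decide := true }) only [e7_swap, e7_swap', e7_sq, e7_sq',
        mul_assoc, mul_add, add_mul, sub_mul, mul_sub, neg_mul, mul_neg, neg_neg,
        mul_zero, zero_mul, add_zero, zero_add, sub_zero, zero_sub, neg_zero,
        sub_self, sub_neg_eq_add, neg_add_rev]
      try abel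
    rw [key]; exact Submodule.zero_mem _
  · have key : d ((e7 0 - e7 2) * e7 6) = 0 := by
      rw [hL, map_sub, h0, h2, h6, map_sub, sigma7_e7, sigma7_e7]
      simp (config := { decide := true }) only [e7_swap, e7_swap', e7_sq, e7_sq',
        mul_assoc, mul_add, add_mul, sub_mul, mul_sub, neg_mul, mul_neg, neg_neg,
        mul_zero, zero_mul, add_zero, zero_add, sub_zero, zero_sub, neg_zero,
        sub_self, sub_neg_eq_add, neg_add_rev]
      try abel
    rw [key]; exact Submodule.zero_mem _
  · have key : d ((e7 1 - e7 3) * e7 6) = 0 := by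
      rw [hL, map_sub, h1, h3, h6, map_sub, sigma7_e7, sigma7_e7]
      simp (config := { decide := true }) only [e7_swap, e7_swap', e7_sq, e7_sq',
        mul_assoc, mul_add, add_mul, sub_mul, mul_sub, neg_mul, mul_neg, neg_neg,
        mul_zero, zero_mul, add_zero, zero_add, sub_zero, zero_sub, neg_zero,
        sub_self, sub_neg_eq_add, neg_add_rev]
      try abel
    rw [key]; exact Submodule.zero_mem _

/-- The differential of the DGA of the elliptic arrangement preserves the ideal
`I`, hence descends to a differential on `A = B/I`. -/
theorem diff_preserves_ideal (d : Lam7 →ₗ[ℚ] Lam7) (hd : IsDiff7 d) :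
    ∀ x ∈ idl7, d x ∈ idl7 := by
  intro x hx
  have hx' : x ∈ Submodule.span ℚ {x | ∃ a b r : Lam7, r ∈ rels7 ∧ x = a * r * b} := hx
  refine Submodule.span_induction (p := fun x _ => d x ∈ idl7) ?_ ?_ ?_ ?_ hx'
  · rintro y ⟨a, b, r, hr, rfl⟩
    show d (a * r * b) ∈ idl7
    have hσr : sigma7 r = r := sigma7_rels hr
    have key : d (a * r * b) = (d a * r) * b + sigma7 a * d r * b + (sigma7 a * r) * d b := by
      rw [hd.1 (a * r) b, hd.1 a r, map_mul, hσr, add_mul]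
    rw [key]
    exact Submodule.add_mem idl7 (Submodule.add_mem idl7 (gen_mem (d a) b r hr)
      (idl7_mul_right b (idl7_mul_left (sigma7 a) (d_rels d hd hr))))
      (gen_mem (sigma7 a) (d b) r hr)
  · show d 0 ∈ idl7
    rw [map_zero]; exact Submodule.zero_mem _
  · intro x y _ _ hx hy
    show d (x + y) ∈ idl7
    rw [map_add]; exact Submodule.add_mem _ hx hy
  · intro q x _ hx
    show d (q • x) ∈ idl7
    rw [map_smul]; exact Submodule.smul_mem _ q hx
end

section
/- With A = B/I and d as above, the degree-1 cohomology H¹(A, d) = ker(d : A¹ → A²) has dimension 4 over ℚ, spanned by the classes of x₁, y₁, x₂, y₂. Equivalently: the elements dg₁ = x₁y₁, dg₂ = x₂y₂, dg₃ = x₁y₁ − x₁y₂ − x₂y₁ + x₂y₂ are linearly independent in A², so no nonzero linear combination of g₁, g₂, g₃ lies in ker d, while d vanishes on the span of x₁, y₁, x₂, y₂. -/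
open ExteriorAlgebra

/-- The differential induced by `d` on the quotient `A = B/I`. -/
noncomputable def dbar7 (d : Lam7 →ₗ[ℚ] Lam7) (hdi : ∀ x ∈ idl7, d x ∈ idl7) :
    (Lam7 ⧸ idl7) →ₗ[ℚ] Lam7 ⧸ idl7 :=
  Submodule.mapQ idl7 idl7 d (fun x hx => hdi x hx)

/-- The degree-`k` piece `Aᵏ` of `A = B/I`: the image in the quotient of the
degree-`k` part of the exterior algebra. -/
noncomputable def Apiece7 (k : ℕ) : Submodule ℚ (Lam7 ⧸ idl7) :=
  Submodule.map idl7.mkQ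
    ((LinearMap.range (ExteriorAlgebra.ι ℚ : (Fin 7 → ℚ) →ₗ[ℚ] Lam7)) ^ k)

/-- projection zeroing out the last three coordinates -/
noncomputable def p7 : (Fin 7 → ℚ) →ₗ[ℚ] (Fin 7 → ℚ) :=
  LinearMap.pi (fun k => if (k : ℕ) < 4 then LinearMap.proj k else 0)

noncomputable def phi7 : Lam7 →ₐ[ℚ] Lam7 := ExteriorAlgebra.map p7

lemma p7_single_lt (i : Fin 7) (h : (i : ℕ) < 4) : p7 (Pi.single i 1) = Pi.single i 1 := by
  funext k
  simp only [p7, LinearMap.pi_apply]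
  split_ifs with hk
  · simp
  · rw [Pi.single_apply, if_neg, LinearMap.zero_apply]
    rintro rfl; exact hk h

lemma p7_single_ge (i : Fin 7) (h : 4 ≤ (i : ℕ)) : p7 (Pi.single i 1) = 0 := by
  funext k
  simp only [p7, LinearMap.pi_apply]
  split_ifs with hk
  · rw [LinearMap.proj_apply, Pi.single_apply, if_neg, Pi.zero_apply]
    rintro rfl; omega
  · rfl

lemma phi7_e_lt (i : Fin 7) (h : (i : ℕ) < 4) : phi7 (e7 i) = e7 i := by
  rw [e7, phi7, map_apply_ι, p7_single_lt i h]

lemma phi7_e_ge (i : Fin 7) (h : 4 ≤ (i : ℕ)) : phi7 (e7 i) = 0 := by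
  rw [e7, phi7, map_apply_ι, p7_single_ge i h, map_zero]

/-- picking out two coordinates -/
noncomputable def pick2 (i j : Fin 7) : (Fin 7 → ℚ) →ₗ[ℚ] (Fin 2 → ℚ) :=
  LinearMap.pi (fun k => LinearMap.proj (![i, j] k))

noncomputable def fam2 (i j : Fin 7) : ∀ n : ℕ, (Fin 7 → ℚ) [⋀^Fin n]→ₗ[ℚ] ℚ
  | 2 => (Matrix.detRowAlternating).compLinearMap (pick2 i j)
  | _ => 0

noncomputable def L2 (i j : Fin 7) : Lam7 →ₗ[ℚ] ℚ := liftAlternating (fam2 i j)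

lemma L2_apply (i j : Fin 7) (a b : Fin 7 → ℚ) :
    L2 i j (ExteriorAlgebra.ι ℚ a * ExteriorAlgebra.ι ℚ b) = a i * b j - a j * b i := by
  rw [L2, liftAlternating_ι_mul, liftAlternating_ι]
  show (fam2 i j 2).curryLeft a ![b] = _
  rw [AlternatingMap.curryLeft_apply_apply]
  show (Matrix.of fun k => pick2 i j (Matrix.vecCons a ![b] k)).det = _
  rw [Matrix.det_fin_two]
  simp [pick2, Matrix.of_apply]

noncomputable def pick1 (i : Fin 7) : (Fin 7 → ℚ) →ₗ[ℚ] (Fin 1 → ℚ) :=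
  LinearMap.pi (fun _ => LinearMap.proj i)

noncomputable def fam1 (i : Fin 7) : ∀ n : ℕ, (Fin 7 → ℚ) [⋀^Fin n]→ₗ[ℚ] ℚ
  | 1 => (Matrix.detRowAlternating).compLinearMap (pick1 i)
  | _ => 0

noncomputable def L1 (i : Fin 7) : Lam7 →ₗ[ℚ] ℚ := liftAlternating (fam1 i)

lemma L1_apply (i : Fin 7) (a : Fin 7 → ℚ) : L1 i (ExteriorAlgebra.ι ℚ a) = a i := by
  rw [L1, liftAlternating_ι]
  show (Matrix.of fun k => pick1 i (![a] k)).det = _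
  rw [Matrix.det_fin_one]
  simp [pick1, Matrix.of_apply]

lemma L2_ee (i j k l : Fin 7) :
    L2 i j (e7 k * e7 l) =
      (if k = i then 1 else 0) * (if l = j then 1 else 0)
        - (if k = j then 1 else 0) * (if l = i then 1 else 0) := by
  rw [e7, e7, L2_apply]
  simp [Pi.single_apply, eq_comm]

lemma L1_e (i k : Fin 7) : L1 i (e7 k) = if k = i then 1 else 0 := by
  rw [e7, L1_apply, Pi.single_apply]
  simp [eq_comm]

lemma phi7_rels {r : Lam7} (hr : r ∈ rels7) : phi7 r = 0 := by
  have h4 : phi7 (e7 4) = 0 := phi7_e_ge 4 (by decide)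
  have h5 : phi7 (e7 5) = 0 := phi7_e_ge 5 (by decide)
  have h6 : phi7 (e7 6) = 0 := phi7_e_ge 6 (by decide)
  simp only [rels7, Set.mem_insert_iff, Set.mem_singleton_iff] at hr
  rcases hr with rfl | rfl | rfl | rfl | rfl | rfl | rfl <;>
    simp [h4, h5, h6]

lemma phi7_idl {x : Lam7} (hx : x ∈ idl7) : phi7 x = 0 := by
  have hle : idl7 ≤ LinearMap.ker phi7.toLinearMap := by
    rw [idl7, Submodule.span_le]
    rintro x ⟨a, b, r, hr, rfl⟩
    simp only [SetLike.mem_coe, LinearMap.mem_ker, AlgHom.toLinearMap_apply, map_mul,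
      phi7_rels hr, mul_zero, zero_mul]
  exact hle hx

lemma deg1_coef {c0 c1 c2 c3 : ℚ}
    (h : c0 • e7 0 + c1 • e7 1 + c2 • e7 2 + c3 • e7 3 ∈ idl7) :
    c0 = 0 ∧ c1 = 0 ∧ c2 = 0 ∧ c3 = 0 := by
  have hphi := phi7_idl h
  have hfix : phi7 (c0 • e7 0 + c1 • e7 1 + c2 • e7 2 + c3 • e7 3) =
      c0 • e7 0 + c1 • e7 1 + c2 • e7 2 + c3 • e7 3 := by
    simp [phi7_e_lt 0 (by decide), phi7_e_lt 1 (by decide),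
      phi7_e_lt 2 (by decide), phi7_e_lt 3 (by decide)]
  rw [hfix] at hphi
  refine ⟨?_, ?_, ?_, ?_⟩
  · have := congrArg (L1 0) hphi; simpa [L1_e] using this
  · have := congrArg (L1 1) hphi; simpa [L1_e] using this
  · have := congrArg (L1 2) hphi; simpa [L1_e] using this
  · have := congrArg (L1 3) hphi; simpa [L1_e] using this

lemma deg2_coef {c4 c5 c6 : ℚ}
    (h : c4 • (e7 0 * e7 1) + c5 • (e7 2 * e7 3) +
      c6 • (e7 0 * e7 1 - e7 0 * e7 3 - e7 2 * e7 1 + e7 2 * e7 3) ∈ idl7) :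
    c4 = 0 ∧ c5 = 0 ∧ c6 = 0 := by
  have hphi := phi7_idl h
  have hfix : phi7 (c4 • (e7 0 * e7 1) + c5 • (e7 2 * e7 3) +
      c6 • (e7 0 * e7 1 - e7 0 * e7 3 - e7 2 * e7 1 + e7 2 * e7 3)) =
      c4 • (e7 0 * e7 1) + c5 • (e7 2 * e7 3) +
      c6 • (e7 0 * e7 1 - e7 0 * e7 3 - e7 2 * e7 1 + e7 2 * e7 3) := by
    simp [phi7_e_lt 0 (by decide), phi7_e_lt 1 (by decide),
      phi7_e_lt 2 (by decide), phi7_e_lt 3 (by decide)]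
  rw [hfix] at hphi
  have h1 := congrArg (L2 0 1) hphi
  have h2 := congrArg (L2 2 3) hphi
  have h3 := congrArg (L2 0 3) hphi
  simp [L2_ee] at h1 h2 h3
  refine ⟨?_, ?_, ?_⟩ <;> linarith

lemma pi_decomp (m : Fin 7 → ℚ) :
    ExteriorAlgebra.ι ℚ m = ∑ i : Fin 7, m i • e7 i := by
  have hm : m = ∑ i : Fin 7, m i • (Pi.single i 1 : Fin 7 → ℚ) := by
    funext k
    rw [Finset.sum_apply]
    simp only [Pi.smul_apply, Pi.single_apply, smul_eq_mul, mul_ite, mul_one, mul_zero]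
    rw [Finset.sum_ite_eq Finset.univ k m]
    simp
  conv_lhs => rw [hm]
  rw [map_sum]
  simp only [map_smul, e7]

/-- `H¹(A,d) = ker(d : A¹ → A²)` has dimension `4` over `ℚ`, and it is spanned
by the classes of `x₁, y₁, x₂, y₂`. -/
theorem H1_of_elliptic_DGA (d : Lam7 →ₗ[ℚ] Lam7) (hd : IsDiff7 d)
    (hdi : ∀ x ∈ idl7, d x ∈ idl7) :
    Module.finrank ℚ (Apiece7 1 ⊓ LinearMap.ker (dbar7 d hdi) : Submodule ℚ (Lam7 ⧸ idl7)) = 4 ∧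
    (Apiece7 1 ⊓ LinearMap.ker (dbar7 d hdi) : Submodule ℚ (Lam7 ⧸ idl7)) =
      Submodule.span ℚ
        {idl7.mkQ (e7 0), idl7.mkQ (e7 1), idl7.mkQ (e7 2), idl7.mkQ (e7 3)} := by
  obtain ⟨hleib, h0, h1, h2, h3, h4, h5, h6⟩ := hd
  have hgen : ∀ i : Fin 7, d (e7 i) = 0 → idl7.mkQ (e7 i) ∈
      (Apiece7 1 ⊓ LinearMap.ker (dbar7 d hdi) : Submodule ℚ (Lam7 ⧸ idl7)) := by
    intro i hi
    refine Submodule.mem_inf.2 ⟨?_, ?_⟩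
    · exact ⟨e7 i, by rw [pow_one]; exact ⟨Pi.single i 1, rfl⟩, rfl⟩
    · rw [LinearMap.mem_ker, dbar7, Submodule.mkQ_apply, Submodule.mapQ_apply, hi]
      simp
  have key : (Apiece7 1 ⊓ LinearMap.ker (dbar7 d hdi) : Submodule ℚ (Lam7 ⧸ idl7)) =
      Submodule.span ℚ
        {idl7.mkQ (e7 0), idl7.mkQ (e7 1), idl7.mkQ (e7 2), idl7.mkQ (e7 3)} := by
    apply le_antisymm
    · intro z hz
      obtain ⟨hz1, hz2⟩ := Submodule.mem_inf.1 hz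
      rw [Apiece7, pow_one] at hz1
      obtain ⟨v, ⟨m, rfl⟩, rfl⟩ := hz1
      rw [LinearMap.mem_ker, dbar7, Submodule.mkQ_apply, Submodule.mapQ_apply] at hz2
      replace hz2 : d (ExteriorAlgebra.ι ℚ m) ∈ idl7 :=
        (Submodule.Quotient.mk_eq_zero _).1 hz2
      have hdv : d (ExteriorAlgebra.ι ℚ m) =
          m 4 • (e7 0 * e7 1) + m 5 • (e7 2 * e7 3) +
          m 6 • (e7 0 * e7 1 - e7 0 * e7 3 - e7 2 * e7 1 + e7 2 * e7 3) := by
        rw [pi_decomp, map_sum, Fin.sum_univ_seven]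
        simp only [map_smul, h0, h1, h2, h3, h4, h5, h6, smul_zero]
        abel
      rw [hdv] at hz2
      obtain ⟨hm4, hm5, hm6⟩ := deg2_coef hz2
      have hv : ExteriorAlgebra.ι ℚ m =
          m 0 • e7 0 + m 1 • e7 1 + m 2 • e7 2 + m 3 • e7 3 := by
        rw [pi_decomp, Fin.sum_univ_seven, hm4, hm5, hm6]
        simp
      rw [hv]
      have q0 : idl7.mkQ (e7 0) ∈ Submodule.span ℚ
          {idl7.mkQ (e7 0), idl7.mkQ (e7 1), idl7.mkQ (e7 2), idl7.mkQ (e7 3)} :=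
        Submodule.subset_span (by simp)
      have q1 : idl7.mkQ (e7 1) ∈ Submodule.span ℚ
          {idl7.mkQ (e7 0), idl7.mkQ (e7 1), idl7.mkQ (e7 2), idl7.mkQ (e7 3)} :=
        Submodule.subset_span (by simp)
      have q2 : idl7.mkQ (e7 2) ∈ Submodule.span ℚ
          {idl7.mkQ (e7 0), idl7.mkQ (e7 1), idl7.mkQ (e7 2), idl7.mkQ (e7 3)} :=
        Submodule.subset_span (by simp)
      have q3 : idl7.mkQ (e7 3) ∈ Submodule.span ℚ
          {idl7.mkQ (e7 0), idl7.mkQ (e7 1), idl7.mkQ (e7 2), idl7.mkQ (e7 3)} :=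
        Submodule.subset_span (by simp)
      simp only [map_add, map_smul]
      exact Submodule.add_mem _ (Submodule.add_mem _ (Submodule.add_mem _
        (Submodule.smul_mem _ _ q0) (Submodule.smul_mem _ _ q1))
        (Submodule.smul_mem _ _ q2)) (Submodule.smul_mem _ _ q3)
    · rw [Submodule.span_le]
      rintro x hx
      simp only [Set.mem_insert_iff, Set.mem_singleton_iff] at hx
      rcases hx with rfl | rfl | rfl | rfl
      · exact hgen 0 h0
      · exact hgen 1 h1
      · exact hgen 2 h2
      · exact hgen 3 h3
  refine ⟨?_, key⟩
  rw [key]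
  have hli : LinearIndependent ℚ
      ![idl7.mkQ (e7 0), idl7.mkQ (e7 1), idl7.mkQ (e7 2), idl7.mkQ (e7 3)] := by
    rw [Fintype.linearIndependent_iff]
    intro g hg
    rw [Fin.sum_univ_four] at hg
    simp only [Matrix.cons_val_zero, Matrix.cons_val_one, Matrix.head_cons,
      Matrix.cons_val_two, Matrix.tail_cons, Matrix.cons_val_three] at hg
    have hw : g 0 • e7 0 + g 1 • e7 1 + g 2 • e7 2 + g 3 • e7 3 ∈ idl7 := by
      rw [← Submodule.Quotient.mk_eq_zero, ← Submodule.mkQ_apply]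
      simpa only [map_add, map_smul] using hg
    obtain ⟨c0, c1, c2, c3⟩ := deg1_coef hw
    intro i
    fin_cases i
    · simpa using c0
    · simpa using c1
    · simpa using c2
    · simpa using c3
  have hset : ({idl7.mkQ (e7 0), idl7.mkQ (e7 1), idl7.mkQ (e7 2), idl7.mkQ (e7 3)} :
      Set (Lam7 ⧸ idl7)) = Set.range
      ![idl7.mkQ (e7 0), idl7.mkQ (e7 1), idl7.mkQ (e7 2), idl7.mkQ (e7 3)] := by
    ext x
    constructor
    · rintro (rfl | rfl | rfl | rfl)
      · exact ⟨0, rfl⟩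
      · exact ⟨1, rfl⟩
      · exact ⟨2, rfl⟩
      · exact ⟨3, rfl⟩
    · rintro ⟨i, rfl⟩
      fin_cases i <;> simp
  rw [hset, finrank_span_eq_card hli]
  rfl
end

section
/- Let M be an n × k integer matrix, inducing a continuous group homomorphism φ : (ℝ/ℤ)ⁿ → (ℝ/ℤ)ᵏ. Then ker(φ) ⊆ (ℝ/ℤ)ⁿ is connected if and only if the quotient group ℤᵏ / Mᵀ(ℤⁿ) is torsion-free. -/
/-- Restored from older Mathlib: a monoid is torsion-free if no nonzero element has finite order. -/
def AddMonoid.IsTorsionFree (G : Type*) [AddMonoid G] : Prop :=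
  ∀ g : G, g ≠ 0 → ¬IsOfFinAddOrder g

open Finset

namespace TKAux

lemma coe_eq_zero_iff' {F : Type*} [Field F] [LinearOrder F] [IsStrictOrderedRing F] {r : F} :
    ((r : AddCircle (1:F)) = 0) ↔ ∃ z : ℤ, (z : F) = r := by
  rw [AddCircle.coe_eq_zero_iff]
  simp [zsmul_eq_mul]

lemma coe_sum_zsmul {F : Type*} [Field F] [LinearOrder F] [IsStrictOrderedRing F] {ι : Type*} [Fintype ι]
    (c : ι → ℤ) (r : ι → F) :
    ∑ i, c i • ((r i : AddCircle (1:F))) = ((∑ i, (c i : F) * r i : F) : AddCircle (1:F)) := by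
  have : ∀ i, c i • ((r i : AddCircle (1:F))) = (((c i : F) * r i : F) : AddCircle (1:F)) := by
    intro i
    rw [← zsmul_eq_mul]
    exact (map_zsmul (QuotientAddGroup.mk' (AddSubgroup.zmultiples (1:F))) (c i) (r i)).symm
  rw [Finset.sum_congr rfl fun i _ => this i]
  exact (map_sum (QuotientAddGroup.mk' (AddSubgroup.zmultiples (1:F))) _ _).symm

lemma coe_int_eq_zero {F : Type*} [Field F] [LinearOrder F] [IsStrictOrderedRing F] (z : ℤ) :
    (((z:F)) : AddCircle (1:F)) = 0 := coe_eq_zero_iff'.mpr ⟨z, rfl⟩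

lemma common_denom {ι : Type*} [Fintype ι] (q : ι → ℚ) :
    ∃ d : ℕ, 0 < d ∧ ∀ i, ∃ z : ℤ, (z : ℚ) = (d : ℚ) * q i := by
  refine ⟨∏ i, (q i).den, Finset.prod_pos fun i _ => (q i).pos, fun i => ?_⟩
  obtain ⟨t, ht⟩ : (q i).den ∣ ∏ j, (q j).den := Finset.dvd_prod_of_mem _ (mem_univ i)
  refine ⟨(q i).num * t, ?_⟩
  rw [ht]
  push_cast
  rw [mul_comm ((q i).den : ℚ) (t : ℚ), mul_assoc, mul_comm ((q i).den : ℚ) (q i),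
    Rat.mul_den_eq_num]
  ring

lemma finite_torsion (D : ℕ) (hD : 0 < D) :
    {y : AddCircle (1:ℝ) | (D:ℤ) • y = 0}.Finite := by
  have hsub : {y : AddCircle (1:ℝ) | (D:ℤ) • y = 0} ⊆
      (fun r : ℤ => (((r : ℝ) / (D:ℝ)) : AddCircle (1:ℝ))) '' (Set.Icc 0 (D:ℤ)) := by
    intro y hy
    obtain ⟨t, rfl⟩ : ∃ t : ℝ, ((t : ℝ) : AddCircle (1:ℝ)) = y := Quotient.exists_rep y
    have h1 : ((((D:ℤ) • t : ℝ)) : AddCircle (1:ℝ)) = 0 := by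
      rw [AddCircle.coe_zsmul]; exact hy
    rw [AddCircle.coe_eq_zero_iff] at h1
    obtain ⟨z, hz⟩ := h1
    simp only [zsmul_eq_mul, mul_one] at hz
    push_cast at hz
    have hDne : (D:ℝ) ≠ 0 := by positivity
    have ht : t = (z:ℝ) / D := by rw [eq_div_iff hDne]; linarith
    refine ⟨z % D, ⟨Int.emod_nonneg z (by exact_mod_cast hD.ne'),
      le_of_lt (Int.emod_lt_of_pos z (by exact_mod_cast hD))⟩, ?_⟩
    have hdecomp : ((D : ℤ) * (z / D) + z % D : ℤ) = z := Int.mul_ediv_add_emod z D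
    have hcast : (D:ℝ) * ((z / (D:ℤ) : ℤ) : ℝ) + ((z % (D:ℤ) : ℤ) : ℝ) = (z:ℝ) := by
      exact_mod_cast congrArg (Int.cast : ℤ → ℝ) hdecomp
    have hsplit : (z:ℝ)/D = ((z % (D:ℤ) : ℤ) : ℝ)/D + ((z / (D:ℤ) : ℤ) : ℝ) := by
      field_simp
      linarith
    rw [ht, hsplit, AddCircle.coe_add, coe_int_eq_zero]
    simp
  exact Set.Finite.subset ((Set.finite_Icc _ _).image _) hsub

/-- Step A: real solvability implies rational solvability for integer systems. -/
lemma exists_rat_solution {n k : ℕ} (M : Matrix (Fin k) (Fin n) ℤ)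
    (v : Fin k → ℤ) (xt : Fin n → ℝ)
    (hv : ∀ j, (v j : ℝ) = ∑ i, (M j i : ℝ) * xt i) :
    ∃ q : Fin n → ℚ, ∀ j, (v j : ℚ) = ∑ i, (M j i : ℚ) * q i := by
  by_contra hcon
  set Mq : Matrix (Fin k) (Fin n) ℚ := M.map (Int.cast : ℤ → ℚ) with hMq
  set vq : Fin k → ℚ := fun j => (v j : ℚ) with hvq
  have hnotmem : vq ∉ LinearMap.range Mq.mulVecLin := by
    intro ⟨q, hq⟩
    apply hcon
    refine ⟨q, fun j => ?_⟩
    rw [show (v j : ℚ) = vq j from rfl, ← congrFun hq j]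
    simp [Matrix.mulVecLin_apply, Matrix.mulVec, dotProduct, hMq, Matrix.map_apply]
  set R := LinearMap.range Mq.mulVecLin
  have hne : R.mkQ vq ≠ 0 := by
    rw [Ne, Submodule.mkQ_apply, Submodule.Quotient.mk_eq_zero]
    exact hnotmem
  have : ¬ ∀ φ : Module.Dual ℚ ((Fin k → ℚ) ⧸ R), φ (R.mkQ vq) = 0 := by
    rw [Module.forall_dual_apply_eq_zero_iff]
    exact hne
  obtain ⟨φ, hφ⟩ := not_forall.mp this
  set g : (Fin k → ℚ) →ₗ[ℚ] ℚ := φ.comp R.mkQ with hg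
  have hgrange : ∀ y ∈ R, g y = 0 := by
    intro y hy
    have : R.mkQ y = 0 := by
      rw [Submodule.mkQ_apply, Submodule.Quotient.mk_eq_zero]; exact hy
    simp [hg, LinearMap.comp_apply, this]
  set w : Fin k → ℚ := fun j => g (fun j' => if j = j' then 1 else 0) with hw
  have hgapply : ∀ z : Fin k → ℚ, g z = ∑ j, z j * w j := by
    intro z
    rw [LinearMap.pi_apply_eq_sum_univ g z]
    simp [hw, smul_eq_mul]
  have hcol : ∀ i, ∑ j, (M j i : ℚ) * w j = 0 := by
    intro i
    have hmem : (fun j => (M j i : ℚ)) ∈ R := by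
      refine ⟨Pi.single i 1, ?_⟩
      funext j
      simp [Matrix.mulVecLin_apply, Matrix.mulVec_single, hMq, Matrix.map_apply]
    have := hgrange _ hmem
    rwa [hgapply] at this
  have hreal : ∑ j, (w j : ℝ) * (v j : ℝ) = 0 := by
    calc ∑ j, (w j : ℝ) * (v j : ℝ)
        = ∑ j, (w j : ℝ) * (∑ i, (M j i : ℝ) * xt i) := by
          refine Finset.sum_congr rfl fun j _ => by rw [hv j]
      _ = ∑ i, (∑ j, (M j i : ℝ) * (w j : ℝ)) * xt i := by
          simp_rw [Finset.mul_sum]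
          rw [Finset.sum_comm]
          refine Finset.sum_congr rfl fun i _ => ?_
          rw [Finset.sum_mul]
          refine Finset.sum_congr rfl fun j _ => by ring
      _ = 0 := by
          refine Finset.sum_eq_zero fun i _ => ?_
          have : ((∑ j, (M j i : ℚ) * w j : ℚ) : ℝ) = 0 := by rw [hcol i]; norm_num
          push_cast at this
          rw [this, zero_mul]
  have hgv : g vq ≠ 0 := hφ
  have : ((g vq : ℚ) : ℝ) = 0 := by
    rw [hgapply vq]
    push_cast
    rw [← hreal]
    refine Finset.sum_congr rfl fun j _ => ?_
    simp only [hvq]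
    push_cast
    ring
  exact hgv (by exact_mod_cast this)

/-- Steps A + B: real solvability + torsion-free cokernel gives integer solvability. -/
lemma exists_int_solution {n k : ℕ} (M : Matrix (Fin k) (Fin n) ℤ)
    (hTF : AddMonoid.IsTorsionFree ((Fin k → ℤ) ⧸ LinearMap.range (Matrix.mulVecLin M)))
    (v : Fin k → ℤ) (xt : Fin n → ℝ)
    (hv : ∀ j, (v j : ℝ) = ∑ i, (M j i : ℝ) * xt i) :
    ∃ u : Fin n → ℤ, M.mulVec u = v := by
  obtain ⟨q, hq⟩ := exists_rat_solution M v xt hv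
  obtain ⟨d, hd, hdq⟩ := common_denom q
  choose u' hu' using hdq
  set R := LinearMap.range (Matrix.mulVecLin M)
  have hMu' : M.mulVec u' = d • v := by
    funext j
    have : ((M.mulVec u' j : ℤ) : ℚ) = ((d • v) j : ℚ) := by
      simp only [Matrix.mulVec, dotProduct]
      push_cast
      rw [Finset.sum_congr rfl fun i _ => by rw [hu' i]]
      simp only [Pi.smul_apply, smul_eq_mul]
      rw [show ∑ i, (M j i : ℚ) * ((d:ℚ) * q i) = (d:ℚ) * ∑ i, (M j i : ℚ) * q i by
        rw [Finset.mul_sum]; exact Finset.sum_congr rfl fun i _ => by ring]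
      rw [← hq j]
      rw [nsmul_eq_mul]
      push_cast
      ring
    exact_mod_cast this
  have hmk : R.mkQ v = 0 := by
    by_contra hne
    refine hTF _ hne ?_
    refine isOfFinAddOrder_iff_nsmul_eq_zero.mpr ⟨d, hd, ?_⟩
    have : R.mkQ (d • v) = 0 := by
      rw [Submodule.mkQ_apply, Submodule.Quotient.mk_eq_zero]
      exact ⟨u', by rw [Matrix.mulVecLin_apply, hMu']⟩
    rw [map_nsmul] at this
    exact this
  rw [Submodule.mkQ_apply, Submodule.Quotient.mk_eq_zero] at hmk
  obtain ⟨u, hu⟩ := hmk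
  exact ⟨u, by rw [← Matrix.mulVecLin_apply, hu]⟩

end TKAux

/-- For an integer matrix `M ∈ Mat_{k×n}(ℤ)`, inducing the homomorphism
`φ : (ℝ/ℤ)ⁿ → (ℝ/ℤ)ᵏ`, `φ(x)_j = Σ_i M_{j i} x_i`, the kernel of `φ` is
connected if and only if the quotient group `ℤᵏ / M(ℤⁿ)` is torsion-free. -/
theorem torus_kernel_connected_iff_torsionFree {n k : ℕ}
    (M : Matrix (Fin k) (Fin n) ℤ) :
    IsConnected {x : Fin n → AddCircle (1 : ℝ) | ∀ j, ∑ i, M j i • x i = 0} ↔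
      AddMonoid.IsTorsionFree
        ((Fin k → ℤ) ⧸ LinearMap.range (Matrix.mulVecLin M)) := by
  set K := {x : Fin n → AddCircle (1 : ℝ) | ∀ j, ∑ i, M j i • x i = 0} with hKdef
  have h0K : (0 : Fin n → AddCircle (1:ℝ)) ∈ K := by
    intro j; simp
  -- lifting constraints
  have hliftK : ∀ x ∈ K, ∃ (xt : Fin n → ℝ) (v : Fin k → ℤ),
      (∀ i, ((xt i : ℝ) : AddCircle (1:ℝ)) = x i) ∧
      (∀ j, (v j : ℝ) = ∑ i, (M j i : ℝ) * xt i) := by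
    intro x hx
    have hlift : ∀ i, ∃ t : ℝ, ((t : ℝ) : AddCircle (1:ℝ)) = x i :=
      fun i => Quotient.exists_rep (x i)
    choose xt hxt using hlift
    have hconstraint : ∀ j, ∃ z : ℤ, (z:ℝ) = ∑ i, (M j i : ℝ) * xt i := by
      intro j
      have h0 : ((∑ i, (M j i:ℝ) * xt i : ℝ) : AddCircle (1:ℝ)) = 0 := by
        rw [← TKAux.coe_sum_zsmul]
        rw [Finset.sum_congr rfl fun i _ => by rw [hxt i]]
        exact hx j
      exact TKAux.coe_eq_zero_iff'.mp h0
    choose v hv using hconstraint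
    exact ⟨xt, v, hxt, hv⟩
  constructor
  · -- connected → torsion-free
    intro hK
    intro a ha hfin
    obtain ⟨v, rfl⟩ := Submodule.Quotient.mk_surjective _ a
    set R := LinearMap.range (Matrix.mulVecLin M) with hR
    set m := addOrderOf (Submodule.Quotient.mk v : (Fin k → ℤ) ⧸ R) with hmdef
    have hm : 0 < m := hfin.addOrderOf_pos
    have hsm : m • v ∈ R := by
      have h1 : R.mkQ (m • v) = 0 := by
        rw [map_nsmul, Submodule.mkQ_apply]
        exact addOrderOf_nsmul_eq_zero _
      rwa [Submodule.mkQ_apply, Submodule.Quotient.mk_eq_zero] at h1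
    obtain ⟨u, hu⟩ := hsm
    rw [Matrix.mulVecLin_apply] at hu
    -- character separating v from the range
    obtain ⟨c, hc⟩ := CharacterModule.exists_character_apply_ne_zero_of_ne_zero ha
    set gh : (Fin k → ℤ) →+ AddCircle (1:ℚ) := c.comp R.mkQ.toAddMonoidHom with hgh
    have hlift : ∀ j, ∃ r : ℚ, ((r : ℚ) : AddCircle (1:ℚ)) = gh (Pi.single j 1) :=
      fun j => Quotient.exists_rep _
    choose q hq using hlift
    have hgapply : ∀ z : Fin k → ℤ, gh z = ((∑ j, (z j : ℚ) * q j : ℚ) : AddCircle (1:ℚ)) := by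
      intro z
      have hz1 : gh z = ∑ j, gh (Pi.single j (z j)) := by
        conv_lhs => rw [← Finset.univ_sum_single z]
        exact map_sum gh _ _
      rw [hz1]
      have hsingle : ∀ j, Pi.single j (z j) = (z j • Pi.single j (1:ℤ) : Fin k → ℤ) := by
        intro j; funext j'
        by_cases h : j = j' <;> simp [Pi.single_apply, h, smul_eq_mul]
      have hterm : ∀ j, gh (Pi.single j (z j)) = z j • (((q j : ℚ)) : AddCircle (1:ℚ)) := by
        intro j
        rw [hsingle j, map_zsmul, ← hq j]
      rw [Finset.sum_congr rfl fun j _ => hterm j]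
      exact TKAux.coe_sum_zsmul z q
    have hgrange : ∀ y ∈ R, gh y = 0 := by
      intro y hy
      have : R.mkQ y = 0 := by
        rw [Submodule.mkQ_apply, Submodule.Quotient.mk_eq_zero]; exact hy
      show c (R.mkQ y) = 0
      rw [this, map_zero]
    have hcol : ∀ i, ∃ z : ℤ, (z:ℚ) = ∑ j, (M j i : ℚ) * q j := by
      intro i
      have hmem : (fun j => M j i) ∈ R := by
        refine ⟨Pi.single i 1, ?_⟩
        funext j
        simp [Matrix.mulVecLin_apply, Matrix.mulVec_single]
      have h0 := hgrange _ hmem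
      rw [hgapply] at h0
      exact TKAux.coe_eq_zero_iff'.mp h0
    choose cc hcc using hcol
    set χ : (Fin n → AddCircle (1:ℝ)) → AddCircle (1:ℝ) := fun x => ∑ i, cc i • x i with hχdef
    have hχcont : Continuous χ :=
      continuous_finset_sum _ fun i _ => (continuous_zsmul (cc i)).comp (continuous_apply i)
    obtain ⟨D, hD, hDq⟩ := TKAux.common_denom q
    choose zD hzD using hDq
    -- χ takes values in the D-torsion on K
    have hχK : ∀ x ∈ K, (D:ℤ) • χ x = 0 := by
      intro x hx
      obtain ⟨xt, vx, hxt, hvx⟩ := hliftK x hx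
      have hχx : χ x = ((∑ i, (cc i:ℝ) * xt i : ℝ) : AddCircle (1:ℝ)) := by
        rw [show χ x = ∑ i, cc i • x i from rfl]
        rw [show ∑ i, cc i • x i = ∑ i, cc i • ((xt i : ℝ) : AddCircle (1:ℝ)) from
          Finset.sum_congr rfl fun i _ => by rw [hxt i]]
        exact TKAux.coe_sum_zsmul cc xt
      have hr : ∑ i, (cc i:ℝ) * xt i = ∑ j, (q j : ℝ) * (vx j : ℝ) := by
        have hcast : ∀ i, (cc i : ℝ) = ∑ j, (M j i : ℝ) * (q j : ℝ) := by
          intro i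
          have := congrArg (Rat.cast : ℚ → ℝ) (hcc i)
          push_cast at this
          exact this
        calc ∑ i, (cc i:ℝ) * xt i
            = ∑ i, (∑ j, (M j i : ℝ) * (q j : ℝ)) * xt i :=
              Finset.sum_congr rfl fun i _ => by rw [hcast i]
          _ = ∑ j, (q j : ℝ) * (∑ i, (M j i : ℝ) * xt i) := by
              simp_rw [Finset.sum_mul, Finset.mul_sum]
              rw [Finset.sum_comm]
              exact Finset.sum_congr rfl fun i _ => Finset.sum_congr rfl fun j _ => by ring
          _ = ∑ j, (q j : ℝ) * (vx j : ℝ) :=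
              Finset.sum_congr rfl fun j _ => by rw [← hvx j]
      rw [hχx, ← AddCircle.coe_zsmul]
      apply TKAux.coe_eq_zero_iff'.mpr
      refine ⟨∑ j, zD j * vx j, ?_⟩
      rw [zsmul_eq_mul, hr]
      push_cast
      rw [Finset.mul_sum]
      refine Finset.sum_congr rfl fun j _ => ?_
      have hthis : ((zD j : ℤ) : ℝ) = (D:ℝ) * (q j : ℝ) := by
        exact_mod_cast congrArg (Rat.cast : ℚ → ℝ) (hzD j)
      rw [hthis]
      ring
    -- the interesting point x₀
    set x₀ : Fin n → AddCircle (1:ℝ) := fun i => (((u i : ℝ) / (m:ℝ) : ℝ) : AddCircle (1:ℝ))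
      with hx₀def
    have hmne : (m:ℝ) ≠ 0 := by positivity
    have hMu : ∀ j, ∑ i, (M j i : ℝ) * (u i : ℝ) = (m:ℝ) * (v j : ℝ) := by
      intro j
      have := congrFun hu j
      have h2 : ((M.mulVec u j : ℤ) : ℝ) = (((m • v) j : ℤ) : ℝ) := by rw [this]
      simp only [Matrix.mulVec, dotProduct] at h2
      push_cast at h2
      rw [h2]
      simp only [Pi.smul_apply, nsmul_eq_mul]
      push_cast
      ring
    have hx₀K : x₀ ∈ K := by
      intro j
      rw [show ∑ i, M j i • x₀ i = ((∑ i, (M j i:ℝ) * ((u i:ℝ)/(m:ℝ)) : ℝ) : AddCircle (1:ℝ))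
        from TKAux.coe_sum_zsmul _ _]
      apply TKAux.coe_eq_zero_iff'.mpr
      refine ⟨v j, ?_⟩
      rw [show ∑ i, (M j i:ℝ) * ((u i:ℝ)/(m:ℝ)) = (∑ i, (M j i:ℝ) * (u i:ℝ))/(m:ℝ) by
        rw [Finset.sum_div]; exact Finset.sum_congr rfl fun i _ => by ring]
      rw [hMu j]
      field_simp
  -- value of χ at x₀
    set rr : ℚ := ∑ j, (v j : ℚ) * q j with hrr
    have hχx₀ : χ x₀ = (((rr : ℚ) : ℝ) : AddCircle (1:ℝ)) := by
      rw [show χ x₀ = ∑ i, cc i • x₀ i from rfl]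
      rw [show ∑ i, cc i • x₀ i = ((∑ i, (cc i:ℝ) * ((u i:ℝ)/(m:ℝ)) : ℝ) : AddCircle (1:ℝ))
        from TKAux.coe_sum_zsmul _ _]
      congr 1
      have hcast : ∀ i, (cc i : ℝ) = ∑ j, (M j i : ℝ) * (q j : ℝ) := by
        intro i
        have := congrArg (Rat.cast : ℚ → ℝ) (hcc i)
        push_cast at this
        exact this
      calc ∑ i, (cc i:ℝ) * ((u i:ℝ)/(m:ℝ))
          = ∑ i, (∑ j, (M j i : ℝ) * (q j : ℝ)) * ((u i:ℝ)/(m:ℝ)) :=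
            Finset.sum_congr rfl fun i _ => by rw [hcast i]
        _ = ∑ j, (q j : ℝ) * ((∑ i, (M j i : ℝ) * (u i : ℝ))/(m:ℝ)) := by
            simp_rw [Finset.sum_mul, Finset.sum_div, Finset.mul_sum]
            rw [Finset.sum_comm]
            exact Finset.sum_congr rfl fun i _ => Finset.sum_congr rfl fun j _ => by ring
        _ = ∑ j, (q j : ℝ) * (v j : ℝ) := by
            refine Finset.sum_congr rfl fun j _ => ?_
            rw [hMu j]
            field_simp
        _ = ((rr : ℚ) : ℝ) := by
            rw [hrr]
            push_cast
            exact Finset.sum_congr rfl fun j _ => by ring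
    -- subsingleton argument
    have hSfin := TKAux.finite_torsion D hD
    haveI := hSfin.to_subtype
    have hTD : IsTotallyDisconnected {y : AddCircle (1:ℝ) | (D:ℤ) • y = 0} :=
      totallyDisconnectedSpace_subtype_iff.mp inferInstance
    have himg : χ '' K ⊆ {y : AddCircle (1:ℝ) | (D:ℤ) • y = 0} := by
      rintro _ ⟨x, hx, rfl⟩
      exact hχK x hx
    have hsub : (χ '' K).Subsingleton :=
      hTD _ himg (hK.image χ hχcont.continuousOn).isPreconnected
    have hχ0 : χ (0 : Fin n → AddCircle (1:ℝ)) = 0 := by simp [hχdef]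
    have heq : χ x₀ = χ 0 := hsub ⟨x₀, hx₀K, rfl⟩ ⟨0, h0K, rfl⟩
    rw [hχx₀, hχ0] at heq
    obtain ⟨z, hz⟩ := TKAux.coe_eq_zero_iff'.mp heq
    have hzq : (z:ℚ) = rr := by exact_mod_cast hz
    have hgv : gh v = 0 := by
      rw [hgapply v]
      have h3 : (∑ j, ((v j : ℚ)) * q j) = ((z : ℤ) : ℚ) := by rw [← hrr]; exact hzq.symm
      rw [h3]
      exact TKAux.coe_int_eq_zero z
    exact hc hgv
  · -- torsion-free → connected
    intro hTF
    set Mr : Matrix (Fin k) (Fin n) ℝ := M.map (Int.cast : ℤ → ℝ) with hMr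
    have hconnW : IsConnected ((LinearMap.ker Mr.mulVecLin : Submodule ℝ (Fin n → ℝ)) :
        Set (Fin n → ℝ)) :=
      ((LinearMap.ker Mr.mulVecLin).convex).isConnected ⟨0, Submodule.zero_mem _⟩
    have hcont : Continuous (fun xt : Fin n → ℝ => fun i => ((xt i : ℝ) : AddCircle (1:ℝ))) :=
      continuous_pi fun i => (AddCircle.continuous_mk' 1).comp (continuous_apply i)
    have key : K = (fun xt : Fin n → ℝ => fun i => ((xt i : ℝ) : AddCircle (1:ℝ))) ''
        (LinearMap.ker Mr.mulVecLin) := by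
      ext x
      constructor
      · intro hx
        obtain ⟨xt, v, hxt, hv⟩ := hliftK x hx
        obtain ⟨u, hu⟩ := TKAux.exists_int_solution M hTF v xt hv
        refine ⟨xt - (fun i => (u i : ℝ)), ?_, ?_⟩
        · rw [SetLike.mem_coe, LinearMap.mem_ker]
          funext j
          rw [Matrix.mulVecLin_apply]
          simp only [Matrix.mulVec, dotProduct, Pi.sub_apply, Pi.zero_apply,
            hMr, Matrix.map_apply]
          have hMuv : ∑ i, (M j i : ℝ) * (u i : ℝ) = (v j : ℝ) := by
            have := congrFun hu j
            have h2 : ((M.mulVec u j : ℤ) : ℝ) = (v j : ℝ) := by rw [this]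
            simp only [Matrix.mulVec, dotProduct] at h2
            push_cast at h2
            rw [h2]
          have : ∑ i, (M j i : ℝ) * (xt i - (u i : ℝ))
              = (∑ i, (M j i : ℝ) * xt i) - ∑ i, (M j i : ℝ) * (u i : ℝ) := by
            rw [← Finset.sum_sub_distrib]
            exact Finset.sum_congr rfl fun i _ => by ring
          rw [this, hMuv, ← hv j, sub_self]
        · funext i
          simp only [Pi.sub_apply]
          rw [AddCircle.coe_sub, TKAux.coe_int_eq_zero, sub_zero, hxt i]
      · rintro ⟨w, hw, rfl⟩
        intro j
        rw [TKAux.coe_sum_zsmul]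
        have hwj : ∑ i, (M j i:ℝ) * w i = 0 := by
          have := congrFun (LinearMap.mem_ker.mp (SetLike.mem_coe.mp hw)) j
          simpa [Matrix.mulVecLin_apply, Matrix.mulVec, dotProduct, hMr,
            Matrix.map_apply] using this
        rw [hwj]
        simp
    have hfinal : IsConnected K := by
      rw [key]
      exact hconnW.image _ hcont.continuousOn
    exact hfinal
end

section
/- Let M be an n × ℓ integer matrix of rank n such that for every subset S of columns, the kernel of the induced map (ℝ/ℤ)ⁿ → (ℝ/ℤ)^{|S|} (given by the submatrix with columns S, acting as the transpose map x ↦ (⟨column_j, x⟩)_{j∈S}) is connected. Then every n × n submatrix of M has determinant 0, 1, or −1. -/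
open Matrix

private lemma aux_finite_torsion (d : ℤ) (hd : d ≠ 0) :
    {u : AddCircle (1:ℝ) | d • u = 0}.Finite := by
  have hsub : {u : AddCircle (1:ℝ) | d • u = 0} ⊆
      ⋃ k ∈ d.natAbs.divisors, {u : AddCircle (1:ℝ) | addOrderOf u = k} := by
    intro u hu
    have h1 : (addOrderOf u : ℤ) ∣ d := addOrderOf_dvd_iff_zsmul_eq_zero.mpr hu
    have h2 : addOrderOf u ∣ d.natAbs := by
      have := Int.natAbs_dvd_natAbs.mpr h1
      simpa using this
    exact Set.mem_biUnion (Nat.mem_divisors.mpr ⟨h2, Int.natAbs_ne_zero.mpr hd⟩) rfl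
  refine Set.Finite.subset (Set.Finite.biUnion d.natAbs.divisors.finite_toSet ?_) hsub
  intro k hk
  exact AddCircle.finite_setOfPred_addOrderOf_eq (1:ℝ) (Nat.pos_of_mem_divisors hk)

private lemma aux_subsingleton_of_finite_preconnected {α : Type*} [TopologicalSpace α]
    [T1Space α] {s : Set α} (hf : s.Finite) (hc : IsPreconnected s) : s.Subsingleton := by
  haveI := hf.to_subtype
  haveI : PreconnectedSpace s := isPreconnected_iff_preconnectedSpace.mp hc
  have h : (Set.univ : Set s).Subsingleton :=
    IsPreconnected.subsingleton (isPreconnected_univ)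
  rw [Set.subsingleton_univ_iff] at h
  exact (Set.subsingleton_coe s).mp h

/-- Let `M` be an `n × ℓ` integer matrix of rank `n` such that for every subset
`S` of columns the kernel of the induced map `(ℝ/ℤ)ⁿ → (ℝ/ℤ)^{|S|}`,
`x ↦ (Σ_i M_{i j} x_i)_{j ∈ S}`, is connected. Then every `n × n` submatrix of
`M` has determinant `0`, `1`, or `−1`. -/
theorem unimodular_arrangement_det {n ℓ : ℕ} (M : Matrix (Fin n) (Fin ℓ) ℤ)
    (hrank : M.rank = n)
    (hconn : ∀ S : Finset (Fin ℓ),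
      IsConnected {x : Fin n → AddCircle (1 : ℝ) | ∀ j ∈ S, ∑ i, M i j • x i = 0})
    (f : Fin n → Fin ℓ) (hf : Function.Injective f) :
    (M.submatrix id f).det = 0 ∨ (M.submatrix id f).det = 1 ∨
      (M.submatrix id f).det = -1 := by
  set A : Matrix (Fin n) (Fin n) ℤ := M.submatrix id f with hA
  rcases eq_or_ne A.det 0 with h0 | h0
  · exact Or.inl h0
  right
  rw [← Int.isUnit_iff]
  set d : ℤ := A.det with hd
  set S : Finset (Fin ℓ) := Finset.image f Finset.univ with hS
  set K := {x : Fin n → AddCircle (1:ℝ) | ∀ j ∈ S, ∑ i, M i j • x i = 0} with hK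
  have hKconn : IsConnected K := hconn S
  -- the projection as an AddMonoidHom
  let π : ℝ →+ AddCircle (1:ℝ) := QuotientAddGroup.mk' _
  have hπ : ∀ r : ℝ, π r = (r : AddCircle (1:ℝ)) := fun r => rfl
  -- K is contained in the d-torsion
  have hKtor : ∀ x ∈ K, ∀ i, d • x i = 0 := by
    intro x hx
    have hrep : ∀ i, ∃ r : ℝ, (r : AddCircle (1:ℝ)) = x i :=
      fun i => Quotient.exists_rep (x i)
    choose r hr using hrep
    -- each column sum is an integer
    have key : ∀ k : Fin n, ∃ m : ℤ, (m : ℝ) = ∑ i, (A i k : ℝ) * r i := by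
      intro k
      have hmem : f k ∈ S := Finset.mem_image.mpr ⟨k, Finset.mem_univ k, rfl⟩
      have hx0 : ∑ i, M i (f k) • x i = 0 := hx (f k) hmem
      have e1 : ((∑ i, (A i k : ℝ) * r i : ℝ) : AddCircle (1:ℝ)) = 0 := by
        have e2 : ((∑ i, (A i k : ℝ) * r i : ℝ) : AddCircle (1:ℝ))
            = ∑ i, M i (f k) • x i := by
          rw [← hπ, map_sum]
          refine Finset.sum_congr rfl fun i _ => ?_
          have : (A i k : ℝ) * r i = (A i k : ℤ) • r i := by
            rw [zsmul_eq_mul]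
          rw [this, map_zsmul, hπ, hr]
          rfl
        rw [e2, hx0]
      rw [AddCircle.coe_eq_zero_iff] at e1
      obtain ⟨m, hm⟩ := e1
      exact ⟨m, by simpa using hm⟩
    choose m hm using key
    intro i
    -- d • r i is an integer, via the adjugate of Aᵀ
    set A' : Matrix (Fin n) (Fin n) ℝ := A.map ((↑) : ℤ → ℝ) with hA'
    have hdet' : A'.det = (d : ℝ) := by
      rw [hA', hd]
      exact (RingHom.map_det (Int.castRingHom ℝ) A).symm
    have hmv : A'.transpose *ᵥ r = fun k => (m k : ℝ) := by
      funext k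
      simp only [Matrix.mulVec, dotProduct, Matrix.transpose_apply, hA',
        Matrix.map_apply]
      rw [hm k]
    have hmain : (d : ℝ) • r = A'.transpose.adjugate *ᵥ (fun k => (m k : ℝ)) := by
      rw [← hmv, Matrix.mulVec_mulVec, Matrix.adjugate_mul, Matrix.det_transpose, hdet',
        Matrix.smul_mulVec, Matrix.one_mulVec]
    have hint : ∃ z : ℤ, (z : ℝ) = (d : ℝ) * r i := by
      refine ⟨∑ j, (A.transpose.adjugate) i j * m j, ?_⟩
      have := congrFun hmain i
      rw [Pi.smul_apply, smul_eq_mul] at this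
      rw [this]
      simp only [Matrix.mulVec, dotProduct]
      have hadj : A'.transpose.adjugate = (A.transpose.adjugate).map ((↑) : ℤ → ℝ) := by
        rw [hA']
        rw [show (A.map ((↑) : ℤ → ℝ)).transpose = A.transpose.map ((↑) : ℤ → ℝ) from
          Matrix.transpose_map]
        exact (RingHom.map_adjugate (Int.castRingHom ℝ) A.transpose).symm
      rw [hadj]
      push_cast
      simp [Matrix.map_apply]
    obtain ⟨z, hz⟩ := hint
    have : d • x i = ((d : ℝ) * r i : ℝ) := by
      rw [← hr i, ← AddCircle.coe_zsmul, zsmul_eq_mul]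
    rw [this, ← hz, AddCircle.coe_eq_zero_iff]
    exact ⟨z, by simp⟩
  -- K is finite
  have hKfin : K.Finite := by
    refine Set.Finite.subset (Set.Finite.pi
      (fun _ : Fin n => aux_finite_torsion d h0)) ?_
    intro x hx
    rw [Set.mem_univ_pi]
    exact fun i => hKtor x hx i
  -- K is a subsingleton, and 0 ∈ K
  have hsing : K.Subsingleton :=
    aux_subsingleton_of_finite_preconnected hKfin hKconn.isPreconnected
  have h0K : (0 : Fin n → AddCircle (1:ℝ)) ∈ K := by
    intro j hj
    simp
  -- the adjugate columns over d are in K, hence zero, hence d divides adjugate entries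
  have hdvd : ∀ k i, d ∣ A.adjugate k i := by
    intro k i
    set y : Fin n → AddCircle (1:ℝ) :=
      fun i => (((A.adjugate k i : ℝ) / (d : ℝ) : ℝ) : AddCircle (1:ℝ)) with hy
    have hyK : y ∈ K := by
      intro j hj
      obtain ⟨k', _, rfl⟩ := Finset.mem_image.mp hj
      have e2 : ∑ i, M i (f k') • y i
          = ((∑ i, (A i k' : ℝ) * ((A.adjugate k i : ℝ) / (d : ℝ)) : ℝ) : AddCircle (1:ℝ)) := by
        rw [← hπ, map_sum]
        refine Finset.sum_congr rfl fun i' _ => ?_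
        have : (A i' k' : ℝ) * ((A.adjugate k i' : ℝ) / (d : ℝ))
            = (A i' k' : ℤ) • ((A.adjugate k i' : ℝ) / (d : ℝ)) := by
          rw [zsmul_eq_mul]
        rw [this, map_zsmul, hπ]
        rfl
      rw [e2]
      have e3 : (∑ i, (A i k' : ℝ) * ((A.adjugate k i : ℝ) / (d : ℝ)) : ℝ)
          = ((if k = k' then 1 else 0 : ℤ) : ℝ) := by
        simp only [← mul_div_assoc]
        rw [← Finset.sum_div]
        have e4 : (∑ i, (A i k' : ℝ) * (A.adjugate k i : ℝ) : ℝ)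
            = ((∑ i, A.adjugate k i * A i k' : ℤ) : ℝ) := by
          push_cast
          exact Finset.sum_congr rfl fun i' _ => mul_comm _ _
        rw [e4]
        have e5 : (∑ i, A.adjugate k i * A i k' : ℤ) = d * (if k = k' then 1 else 0) := by
          have := congrFun (congrFun (Matrix.adjugate_mul A) k) k'
          simpa [Matrix.mul_apply, Matrix.one_apply, hd] using this
        rw [e5]
        push_cast
        rw [mul_comm, mul_div_assoc, div_self (by exact_mod_cast h0), mul_one]
      rw [e3, AddCircle.coe_eq_zero_iff]
      exact ⟨if k = k' then 1 else 0, by simp⟩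
    have hy0 : y = 0 := hsing hyK h0K
    have : y i = 0 := by rw [hy0]; rfl
    rw [hy, AddCircle.coe_eq_zero_iff] at this
    obtain ⟨z, hz⟩ := this
    refine ⟨z, ?_⟩
    have : (z : ℝ) = (A.adjugate k i : ℝ) / (d : ℝ) := by simpa using hz
    have h2 : (z : ℝ) * (d : ℝ) = (A.adjugate k i : ℝ) := by
      rw [this, div_mul_cancel₀]
      exact_mod_cast h0
    have h3 : ((A.adjugate k i : ℝ)) = ((d * z : ℤ) : ℝ) := by push_cast; rw [← h2]; ring
    exact_mod_cast h3
  -- build an integral inverse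
  choose c hc using fun k i => hdvd k i
  set C : Matrix (Fin n) (Fin n) ℤ := Matrix.of c with hC
  have hCA : d • (C * A) = d • (1 : Matrix (Fin n) (Fin n) ℤ) := by
    have hdC : d • C = A.adjugate := by
      ext k i
      rw [Matrix.smul_apply, smul_eq_mul]
      exact (hc k i).symm
    rw [← Matrix.smul_mul, hdC, Matrix.adjugate_mul, hd]
  have hCA1 : C * A = 1 := by
    ext i j
    have := congrFun (congrFun hCA i) j
    simp only [Matrix.smul_apply, smul_eq_mul] at this
    exact mul_left_cancel₀ h0 this
  have hdetmul : C.det * A.det = 1 := by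
    rw [← Matrix.det_mul, hCA1, Matrix.det_one]
  exact IsUnit.of_mul_eq_one (a := d) C.det (by rw [hd, mul_comm]; exact hdetmul)
end
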